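/- Let V and V' be finite types with |V| = |V'|, let F be a nonempty superset-closed family of finsets of V and F' a nonempty superset-closed family of finsets of V', and let φ be a graph isomorphism from the TAR graph of F to the TAR graph of F'. Then |φ(S)| = |S| holds for every S ∈ F if and only if there exists a bijection ψ : V ≃ V' such that φ(S) equals the image finset ψ(S) for every S ∈ F. -/

import Mathlib

variable {V : Type*} [Fintype V] [DecidableEq V]

/-- A family of finsets is superset-closed if it is closed under taking supersets. -/
def SupersetClosed (F : Finset (Finset V)) : Prop :=
  ∀ ⦃S T : Finset V⦄, S ∈ F → S ⊆ T → T ∈ F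

/-- A minimal member of a family: a member no proper subset of which is a member. -/
def IsMinimalMem (F : Finset (Finset V)) (M : Finset V) : Prop :=
  M ∈ F ∧ ∀ M' : Finset V, M' ⊂ M → M' ∉ F

/-- The TAR graph of a family of finsets: vertices are the members of the family,
two members being adjacent iff their symmetric difference has exactly one element. -/
def TARGraph (F : Finset (Finset V)) : SimpleGraph {S : Finset V // S ∈ F} where
  Adj S T := (symmDiff S.1 T.1).card = 1
  symm := ⟨fun (S T : {S : Finset V // S ∈ F}) h => by show (symmDiff T.1 S.1).card = 1; rw [symmDiff_comm]; exact h⟩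
  loopless := ⟨fun S h => by simp [symmDiff_self] at h⟩

instance (F : Finset (Finset V)) : DecidableRel (TARGraph F).Adj :=
  fun S T => inferInstanceAs (Decidable ((symmDiff S.1 T.1).card = 1))

/-! Since `φ` preserves cardinality, two adjacent members of different sizes are nested, so `φ`
is monotone along covers `S ⋖ insert a S`. Each coatom `{a}ᶜ ∈ F` is sent to a coatom `{b}ᶜ`,
injectively in `a`; any bijection `ψ` extending `a ↦ b` works. Downward from `univ`: a member `S`
missing two points `a ≠ b` has `φ S ⊆ φ (insert a S) ∩ φ (insert b S) = ψ(S)`, and the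
cardinalities force equality. -/

open Finset

theorem Finset.subset_of_card_symmDiff_eq_one {α : Type*} [DecidableEq α] {s t : Finset α}
    (h : #(symmDiff s t) = 1) (hlt : #s < #t) : s ⊆ t := by
  have hs := card_sdiff_add_card_inter s t
  have ht := card_sdiff_add_card_inter t s
  rw [inter_comm] at ht
  rw [symmDiff_def, sup_eq_union, card_union_of_disjoint disjoint_sdiff_sdiff] at h
  exact sdiff_eq_empty_iff_subset.1 (card_eq_zero.1 (by omega))

theorem Finset.image_compl_singleton {α β : Type*} [Fintype α] [Fintype β] [DecidableEq α]
    [DecidableEq β] (ψ : α ≃ β) (a : α) : ({a}ᶜ : Finset α).image ψ = {ψ a}ᶜ := by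
  ext x
  obtain ⟨y, rfl⟩ := ψ.surjective x
  simp

theorem Set.InjOn.exists_equiv_extend {α β : Type*} [Fintype α] [Fintype β]
    (hcard : Fintype.card α = Fintype.card β) {s : Set α} {f : α → β} (hf : s.InjOn f) :
    ∃ e : α ≃ β, ∀ a ∈ s, e a = f a := by
  obtain ⟨e, he⟩ := Set.MapsTo.exists_equiv_extend_of_card_eq (t := Finset.univ)
    (by rw [hcard, card_univ]) (fun a _ => mem_coe.2 (Finset.mem_univ (f a))) hf
  exact ⟨e.trans (Equiv.subtypeUnivEquiv Finset.mem_univ), he⟩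

namespace TARGraph

variable {α β : Type*} [Fintype α] [DecidableEq α] [Fintype β] [DecidableEq β]
  {F : Finset (Finset α)} {F' : Finset (Finset β)}

theorem adj_of_covBy {S T : {S // S ∈ F}} (h : S.1 ⋖ T.1) : (TARGraph F).Adj S T := by
  rw [covBy_iff_card_sdiff_eq_one] at h
  show #(symmDiff S.1 T.1) = 1
  rw [symmDiff_of_le h.1, h.2]

theorem map_subset_map_of_covBy (φ : TARGraph F ≃g TARGraph F')
    (hφ : ∀ S, #(φ S).1 = #S.1) {S T : {S // S ∈ F}} (h : S.1 ⋖ T.1) : (φ S).1 ⊆ (φ T).1 :=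
  subset_of_card_symmDiff_eq_one (φ.map_adj_iff.2 (adj_of_covBy h))
    (by rw [hφ, hφ]; exact card_lt_card h.lt)

theorem exists_map_compl_singleton (φ : TARGraph F ≃g TARGraph F')
    (hφ : ∀ S, #(φ S).1 = #S.1) (hcard : Fintype.card α = Fintype.card β) (a : α) :
    ∃ b : β, ∀ h : {a}ᶜ ∈ F, (φ ⟨{a}ᶜ, h⟩).1 = {b}ᶜ := by
  by_cases ha : {a}ᶜ ∈ F
  · have hcompl : #(φ ⟨{a}ᶜ, ha⟩).1ᶜ = 1 := by
      have hpos : 0 < Fintype.card α := Fintype.card_pos_iff.2 ⟨a⟩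
      rw [card_compl, hφ, card_compl, card_singleton]
      omega
    obtain ⟨b, hb⟩ := card_eq_one.1 hcompl
    exact ⟨b, fun _ => (compl_eq_comm.1 hb).symm⟩
  · have : Nonempty β := Fintype.card_pos_iff.1 (hcard ▸ Fintype.card_pos_iff.2 ⟨a⟩)
    exact ⟨Classical.arbitrary β, fun h => absurd h ha⟩

theorem map_eq_image_of_map_compl_singleton (hsup : SupersetClosed F)
    (φ : TARGraph F ≃g TARGraph F') (hφ : ∀ S, #(φ S).1 = #S.1) (ψ : α ≃ β)
    (hψ : ∀ a (h : {a}ᶜ ∈ F), (φ ⟨{a}ᶜ, h⟩).1 = {ψ a}ᶜ) (S : {S // S ∈ F}) :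
    (φ S).1 = S.1.image ψ := by
  suffices ∀ T (hT : T ∈ F), (φ ⟨T, hT⟩).1 ⊆ T.image ψ from
    eq_of_subset_of_card_le (this S.1 S.2) (by rw [card_image_of_injective _ ψ.injective, hφ])
  intro T
  induction T using WellFoundedGT.induction with | _ T ih => ?_
  intro hT
  rcases Tᶜ.eq_empty_or_nonempty with hT' | hT'
  · rw [compl_eq_empty_iff] at hT'
    subst hT'
    rw [image_univ_equiv]
    exact subset_univ _
  obtain ⟨a, ha⟩ | ⟨a, ha, b, hb, hab⟩ := hT'.exists_eq_singleton_or_nontrivial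
  · rw [compl_eq_comm] at ha
    subst ha
    rw [hψ a hT, image_compl_singleton]
  rw [mem_coe, mem_compl] at ha hb
  have hTa : insert a T ∈ F := hsup hT (subset_insert a T)
  have hTb : insert b T ∈ F := hsup hT (subset_insert b T)
  calc (φ ⟨T, hT⟩).1 ⊆ (φ ⟨_, hTa⟩).1 ∩ (φ ⟨_, hTb⟩).1 :=
        subset_inter (map_subset_map_of_covBy φ hφ (covBy_insert ha))
          (map_subset_map_of_covBy φ hφ (covBy_insert hb))
    _ ⊆ (insert a T).image ψ ∩ (insert b T).image ψ :=
        inter_subset_inter (ih _ (ssubset_insert ha) hTa) (ih _ (ssubset_insert hb) hTb)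
    _ = T.image ψ := by
        rw [← image_inter _ _ ψ.injective]
        congr 1
        grind

theorem exists_equiv_map_eq_image (hsup : SupersetClosed F) (φ : TARGraph F ≃g TARGraph F')
    (hφ : ∀ S, #(φ S).1 = #S.1) (hcard : Fintype.card α = Fintype.card β) :
    ∃ ψ : α ≃ β, ∀ S, (φ S).1 = S.1.image ψ := by
  choose f hf using exists_map_compl_singleton φ hφ hcard
  have hinj : {a | {a}ᶜ ∈ F}.InjOn f := fun a ha b hb hab => by
    have : φ ⟨{a}ᶜ, ha⟩ = φ ⟨{b}ᶜ, hb⟩ := Subtype.ext (by rw [hf a ha, hf b hb, hab])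
    simpa using congrArg Subtype.val (φ.injective this)
  obtain ⟨ψ, hψ⟩ := hinj.exists_equiv_extend hcard
  exact ⟨ψ, map_eq_image_of_map_compl_singleton hsup φ hφ ψ fun a ha => by rw [hf a ha, hψ a ha]⟩

end TARGraph

theorem stmt8_general {V' : Type*} [Fintype V'] [DecidableEq V']
    (F : Finset (Finset V)) (hsup : SupersetClosed F)
    (F' : Finset (Finset V'))
    (hcard : Fintype.card V = Fintype.card V')
    (φ : TARGraph F ≃g TARGraph F') :
    (∀ S : {S : Finset V // S ∈ F}, (φ S).1.card = S.1.card) ↔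
    ∃ ψ : V ≃ V', ∀ S : {S : Finset V // S ∈ F}, (φ S).1 = S.1.image ψ := by
  refine ⟨fun hφ => TARGraph.exists_equiv_map_eq_image hsup φ hφ hcard, ?_⟩
  rintro ⟨ψ, hψ⟩ S
  rw [hψ S, card_image_of_injective _ ψ.injective]

theorem stmt8 {V' : Type*} [Fintype V'] [DecidableEq V']
    (F : Finset (Finset V)) (hne : F.Nonempty) (hsup : SupersetClosed F)
    (F' : Finset (Finset V')) (hne' : F'.Nonempty) (hsup' : SupersetClosed F')
    (hcard : Fintype.card V = Fintype.card V')
    (φ : TARGraph F ≃g TARGraph F') :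
    (∀ S : {S : Finset V // S ∈ F}, (φ S).1.card = S.1.card) ↔
    ∃ ψ : V ≃ V', ∀ S : {S : Finset V // S ∈ F}, (φ S).1 = S.1.image ψ :=
  stmt8_general F hsup F' hcard φ
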